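/- Let p_i ∈ (1/2, 1), ε_i = p_i - 1/2, and ε'_i ∈ (1/2 - γ', 1/2] for all i, where the committee is absolutely balanced with parameter γ ∈ (0,1/2) (so ε_i < 1/2 - γ) and ε'_i ≥ a - 1/2 > 0 for a common a ∈ (1/2, 1]. Define Φ = Σ_i ε_i log((1+2ε_i)/(1-2ε_i)) and Φ̃ = Σ_i ε_i log((1+4ε_iε'_i)/(1-4ε_iε'_i)). Then Φ̃/Φ ≥ 1 - C(1/2 - γ) · (1-a)/(a - 1/2), where C(x) = 4x / ((1-4x²)·log((1+2x)/(1-2x))). -/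

import Mathlib

/-!
With `L = logOdds` (`L t` is the log-odds of the competence `1/2 + t`) we have
`Φ = ∑ εᵢ L(εᵢ)`, `Φ̃ = ∑ εᵢ L(2εᵢε'ᵢ)` and `C x = 4x / ((1 - 4x²) L x)`. Since
`L' t = 4 / (1 - 4t²)` increases on `[0, 1/2)` and `εᵢ - 2εᵢε'ᵢ ≤ 2εᵢ(1 - a)`, each term
of `Φ - Φ̃` is at most `εᵢ L'(εᵢ) · 2εᵢ(1 - a) = C(εᵢ) · 2(1 - a) · εᵢ L(εᵢ)`. Monotonicity
of `C` with `εᵢ < 1/2 - γ`, and `2(1 - a) ≤ (1 - a)/(a - 1/2)`, give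
`Φ - Φ̃ ≤ C(1/2 - γ) (1 - a)/(a - 1/2) · Φ`.
-/

open Real Set

noncomputable def logOdds (t : ℝ) : ℝ := log ((1 + 2 * t) / (1 - 2 * t))

noncomputable def committeeConst (x : ℝ) : ℝ := 4 * x / ((1 - 4 * x ^ 2) * logOdds x)

lemma hasDerivAt_logOdds {t : ℝ} (h₁ : -(1 / 2) < t) (h₂ : t < 1 / 2) :
    HasDerivAt logOdds (4 / (1 - 4 * t ^ 2)) t := by
  have hnum : HasDerivAt (fun s => 1 + 2 * s) 2 t :=
    (((hasDerivAt_id' t).const_mul 2).const_add 1).congr_deriv (mul_one 2)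
  have hden : HasDerivAt (fun s => 1 - 2 * s) (-2) t :=
    (((hasDerivAt_id' t).const_mul 2).const_sub 1).congr_deriv (by ring)
  have hden_pos : 0 < 1 - 2 * t := by linarith
  have hnum_pos : 0 < 1 + 2 * t := by linarith
  refine ((hnum.div hden hden_pos.ne').log (div_pos hnum_pos hden_pos).ne').congr_deriv ?_
  rw [Pi.div_apply, show 1 - 4 * t ^ 2 = (1 + 2 * t) * (1 - 2 * t) by ring]
  field_simp
  ring

lemma logOdds_zero : logOdds 0 = 0 := by simp [logOdds]

lemma four_mul_le_logOdds {t : ℝ} (h₀ : 0 ≤ t) (h₁ : t < 1 / 2) : 4 * t ≤ logOdds t := by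
  have hderiv : ∀ s ∈ Ico (0 : ℝ) (1 / 2),
      HasDerivAt (fun s => logOdds s - 4 * s) (4 / (1 - 4 * s ^ 2) - 4) s := fun s hs =>
    (hasDerivAt_logOdds (by linarith [hs.1]) hs.2).sub
      (((hasDerivAt_id s).const_mul 4).congr_deriv (mul_one 4))
  have hmono : MonotoneOn (fun s => logOdds s - 4 * s) (Ico 0 (1 / 2)) := by
    refine monotoneOn_of_hasDerivWithinAt_nonneg (convex_Ico 0 (1 / 2))
      (HasDerivAt.continuousOn hderiv)
      (fun s hs => (hderiv s (interior_subset hs)).hasDerivWithinAt) fun s hs => ?_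
    rw [interior_Ico] at hs
    have hpos : 0 < 1 - 4 * s ^ 2 := by nlinarith [hs.1, hs.2]
    rw [sub_nonneg, le_div_iff₀ hpos]
    nlinarith [hs.1]
  have := hmono ⟨le_rfl, by norm_num⟩ ⟨h₀, h₁⟩ h₀
  simp only [logOdds_zero, mul_zero, sub_zero] at this
  linarith

lemma logOdds_pos {t : ℝ} (h₀ : 0 < t) (h₁ : t < 1 / 2) : 0 < logOdds t := by
  linarith [four_mul_le_logOdds h₀.le h₁]

/-- `logOdds' t = 4 / (1 - 4t²)` is even and increasing on `[0, 1/2)`, so it is at most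
`logOdds' v` on `[u, v]`. -/
lemma logOdds_sub_le {u v : ℝ} (hu : -v ≤ u) (huv : u ≤ v) (hv : v < 1 / 2) :
    logOdds v - logOdds u ≤ 4 / (1 - 4 * v ^ 2) * (v - u) := by
  have hderiv : ∀ s ∈ Icc u v, HasDerivAt (fun s => 4 / (1 - 4 * v ^ 2) * s - logOdds s)
      (4 / (1 - 4 * v ^ 2) - 4 / (1 - 4 * s ^ 2)) s := fun s hs =>
    (((hasDerivAt_id s).const_mul _).congr_deriv (mul_one _)).sub
      (hasDerivAt_logOdds (by linarith [hs.1]) (by linarith [hs.2]))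
  have hmono : MonotoneOn (fun s => 4 / (1 - 4 * v ^ 2) * s - logOdds s) (Icc u v) := by
    refine monotoneOn_of_hasDerivWithinAt_nonneg (convex_Icc u v)
      (HasDerivAt.continuousOn hderiv)
      (fun s hs => (hderiv s (interior_subset hs)).hasDerivWithinAt) fun s hs => ?_
    rw [interior_Icc] at hs
    have hsq : s ^ 2 ≤ v ^ 2 := sq_le_sq' (by linarith [hs.1]) hs.2.le
    have hpos : 0 < 1 - 4 * v ^ 2 := by nlinarith
    rw [sub_nonneg]
    gcongr
  have := hmono ⟨le_rfl, huv⟩ ⟨huv, le_rfl⟩ huv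
  simp only at this
  linarith

lemma antitoneOn_logOdds_div :
    AntitoneOn (fun t => (1 - 4 * t ^ 2) * logOdds t / t) (Ioo 0 (1 / 2)) := by
  have hderiv : ∀ t ∈ Ioo (0 : ℝ) (1 / 2), HasDerivAt (fun t => (1 - 4 * t ^ 2) * logOdds t / t)
      ((4 * t - (1 + 4 * t ^ 2) * logOdds t) / t ^ 2) t := by
    intro t ⟨h₀, h₁⟩
    have hpoly : HasDerivAt (fun t => 1 - 4 * t ^ 2) (-(8 * t)) t :=
      (((hasDerivAt_pow 2 t).const_mul 4).const_sub 1).congr_deriv (by ring)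
    have hpos : 0 < 1 - 4 * t ^ 2 := by nlinarith
    refine ((hpoly.mul (hasDerivAt_logOdds (by linarith) h₁)).div (hasDerivAt_id' t)
      h₀.ne').congr_deriv ?_
    rw [Pi.mul_apply, mul_div_cancel₀ _ hpos.ne']
    field_simp
    ring
  refine antitoneOn_of_hasDerivWithinAt_nonpos (convex_Ioo 0 (1 / 2))
    (HasDerivAt.continuousOn hderiv)
    (fun t ht => (hderiv t (interior_subset ht)).hasDerivWithinAt) fun t ht => ?_
  rw [interior_Ioo] at ht
  have := four_mul_le_logOdds ht.1.le ht.2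
  apply div_nonpos_of_nonpos_of_nonneg _ (sq_nonneg t)
  nlinarith [ht.1, sq_nonneg t]

lemma committeeConst_le {x b : ℝ} (hx : 0 < x) (hxb : x ≤ b) (hb : b < 1 / 2) :
    committeeConst x ≤ committeeConst b := by
  have hrecip (t : ℝ) : committeeConst t = 4 / ((1 - 4 * t ^ 2) * logOdds t / t) := by
    rw [committeeConst, div_div_eq_mul_div]
  have hb₀ : 0 < b := hx.trans_le hxb
  have hpos : 0 < (1 - 4 * b ^ 2) * logOdds b / b := by
    have : 0 < 1 - 4 * b ^ 2 := by nlinarith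
    have := logOdds_pos hb₀ hb
    positivity
  rw [hrecip, hrecip]
  exact div_le_div_of_nonneg_left (by norm_num) hpos
    (antitoneOn_logOdds_div ⟨hx, hxb.trans_lt hb⟩ ⟨hb₀, hb⟩ hxb)

lemma mul_logOdds_sub_le {a b x y : ℝ} (ha : a ∈ Ioc (1 / 2) 1) (hx : 0 < x) (hxb : x ≤ b)
    (hb : b < 1 / 2) (hy : y ≤ 1 / 2) (hay : a - 1 / 2 ≤ y) :
    x * logOdds x - x * logOdds (2 * x * y) ≤
      committeeConst b * ((1 - a) / (a - 1 / 2)) * (x * logOdds x) := by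
  obtain ⟨ha₀, ha₁⟩ := ha
  have hx₁ : x < 1 / 2 := hxb.trans_lt hb
  have hpos : 0 < 1 - 4 * x ^ 2 := by nlinarith
  have hL := logOdds_pos hx hx₁
  calc x * logOdds x - x * logOdds (2 * x * y)
      = x * (logOdds x - logOdds (2 * x * y)) := by ring
    _ ≤ x * (4 / (1 - 4 * x ^ 2) * (x - 2 * x * y)) := by
        gcongr
        exact logOdds_sub_le (by nlinarith) (by nlinarith) hx₁
    _ ≤ x * (4 / (1 - 4 * x ^ 2) * (2 * x * (1 - a))) := by gcongr; nlinarith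
    _ = committeeConst x * (2 * (1 - a)) * (x * logOdds x) := by
        rw [committeeConst]
        field_simp
    _ ≤ committeeConst b * ((1 - a) / (a - 1 / 2)) * (x * logOdds x) := by
        have hCx : 0 ≤ committeeConst x := by unfold committeeConst; positivity
        gcongr
        · exact hCx.trans (committeeConst_le hx hxb hb)
        · exact committeeConst_le hx hxb hb
        · rw [le_div_iff₀ (by linarith)]
          nlinarith

/-- The pseudo committee potential is within factor
`1 - C(1/2-γ)·(1-a)/(a-1/2)` of the true committee potential. -/
theorem stmt_13 (N : ℕ) (hN : 0 < N) (γ a : ℝ) (ε ε' : Fin N → ℝ)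
    (hγ : γ ∈ Set.Ioo (0:ℝ) (1/2)) (ha : a ∈ Set.Ioc (1/2 : ℝ) 1)
    (hε : ∀ i, ε i ∈ Set.Ioo (0:ℝ) (1/2 - γ))
    (hε' : ∀ i, ε' i ∈ Set.Ioc (0:ℝ) (1/2))
    (hεa : ∀ i, a - 1/2 ≤ ε' i) :
    (∑ i, ε i * Real.log ((1 + 4 * ε i * ε' i) / (1 - 4 * ε i * ε' i))) /
        (∑ i, ε i * Real.log ((1 + 2 * ε i) / (1 - 2 * ε i))) ≥
      1 - (4 * (1/2 - γ) / ((1 - 4 * (1/2 - γ)^2) *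
            Real.log ((1 + 2 * (1/2 - γ)) / (1 - 2 * (1/2 - γ))))) *
          ((1 - a) / (a - 1/2)) := by
  have hb : 1 / 2 - γ < 1 / 2 := by linarith [hγ.1]
  have hpseudo : ∀ i, log ((1 + 4 * ε i * ε' i) / (1 - 4 * ε i * ε' i)) =
      logOdds (2 * ε i * ε' i) := fun i => by unfold logOdds; ring_nf
  have : Nonempty (Fin N) := ⟨⟨0, hN⟩⟩
  have hΦ : 0 < ∑ i, ε i * logOdds (ε i) :=
    Finset.sum_pos (fun i _ => mul_pos (hε i).1 (logOdds_pos (hε i).1 ((hε i).2.trans hb)))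
      Finset.univ_nonempty
  have hloss : ∑ i, ε i * logOdds (ε i) - ∑ i, ε i * logOdds (2 * ε i * ε' i) ≤
      committeeConst (1 / 2 - γ) * ((1 - a) / (a - 1 / 2)) * ∑ i, ε i * logOdds (ε i) := by
    rw [← Finset.sum_sub_distrib, Finset.mul_sum]
    exact Finset.sum_le_sum fun i _ =>
      mul_logOdds_sub_le ha (hε i).1 (hε i).2.le hb (hε' i).2 (hεa i)
  simp only [hpseudo]
  change _ / ∑ i, ε i * logOdds (ε i) ≥ 1 - committeeConst (1 / 2 - γ) * _
  rw [ge_iff_le, le_div_iff₀ hΦ]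
  linarith
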